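/- Let $S$ be a normed space and suppose: (payoff growth) $|\pi(s,x,s')| \le A + B\max\{\|s\|, \|s'\|\}$ for constants $A, B > 0$; (fold-boundedness) $\int_S \|s'\| \, \bar{Q}(ds'|s,x) \le C + \frac{D}{(1+\delta)B + \delta D}\|s\|$ for constants $C, D > 0$ and all $(s,x)$; $\delta \in [0,1)$. If $g: S \to \mathbb{R}$ satisfies $|g(s)| \le E + (B+D)\|s\|$ for some $E > 0$, then the function $F(g)(s) = \max_{x \in X}\int_S \{\pi(s,x,s') + \delta g(s')\}\, \bar{Q}(ds'|s,x)$ satisfies $|F(g)(s)| \le A + \delta E + (B + \delta(B+D)) C + (B+D)\|s\|$ for all $s \in S$; in particular $F$ preserves the linear growth class $\{f : \exists E>0, \; |f(s)| \le E + (B+D)\|s\|\}$. -/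

import Mathlib

open MeasureTheory

theorem abs_integral_le_of_abs_le_add_mul {α : Type*} [MeasurableSpace α] {μ : Measure α}
    [IsProbabilityMeasure μ] {w f : α → ℝ} (hw : Integrable w μ)
    (hf : AEStronglyMeasurable f μ) {a b : ℝ} (hfw : ∀ y, |f y| ≤ a + b * w y) :
    |∫ y, f y ∂μ| ≤ a + b * ∫ y, w y ∂μ := by
  have hbound : Integrable (fun y => a + b * w y) μ := (integrable_const a).add (hw.const_mul b)
  calc |∫ y, f y ∂μ| ≤ ∫ y, |f y| ∂μ := abs_integral_le_integral_abs
    _ ≤ ∫ y, (a + b * w y) ∂μ :=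
        integral_mono (hbound.mono' hf (ae_of_all _ hfw)).abs hbound hfw
    _ = a + b * ∫ y, w y ∂μ := by
        rw [integral_add (integrable_const a) (hw.const_mul b), integral_const_mul]
        simp

theorem abs_ciSup_le {ι : Type*} [Nonempty ι] {f : ι → ℝ} {M : ℝ} (h : ∀ i, |f i| ≤ M) :
    |⨆ i, f i| ≤ M := by
  have hbdd : BddAbove (Set.range f) := ⟨M, Set.forall_mem_range.2 fun i => (abs_le.1 (h i)).2⟩
  obtain ⟨i₀⟩ := ‹Nonempty ι›
  exact abs_le.2 ⟨(abs_le.1 (h i₀)).1.trans (le_ciSup hbdd i₀), ciSup_le fun i => (abs_le.1 (h i)).2⟩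

theorem abs_add_mul_le_of_max_growth {p q A B E K δ r t : ℝ} (hr : 0 ≤ r) (ht : 0 ≤ t)
    (hB : 0 ≤ B) (hδ : 0 ≤ δ) (hp : |p| ≤ A + B * max r t) (hq : |q| ≤ E + K * t) :
    |p + δ * q| ≤ (A + B * r + δ * E) + (B + δ * K) * t := by
  have hmax : B * max r t ≤ B * r + B * t :=
    (mul_le_mul_of_nonneg_left (max_le_add_of_nonneg hr ht) hB).trans_eq (mul_add B r t)
  have hδq : |δ * q| ≤ δ * (E + K * t) := by
    rw [abs_mul, abs_of_nonneg hδ]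
    exact mul_le_mul_of_nonneg_left hq hδ
  calc |p + δ * q| ≤ |p| + |δ * q| := abs_add_le p (δ * q)
    _ ≤ (A + B * r + δ * E) + (B + δ * K) * t := by linarith

theorem bellman_growth_bound_general {S X : Type*} [NormedAddCommGroup S] [MeasurableSpace S]
    [BorelSpace S] [TopologicalSpace X] [Nonempty X]
    (Q : S → X → Measure S) (hQ : ∀ s x, IsProbabilityMeasure (Q s x))
    (hQint : ∀ s x, Integrable (fun s' => ‖s'‖) (Q s x))
    (π : S → X → S → ℝ) (hπc : Continuous fun p : S × X × S => π p.1 p.2.1 p.2.2)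
    (A B C D δ E : ℝ) (hB : 0 < B) (hD : 0 < D)
    (hδ0 : 0 ≤ δ)
    (hπ : ∀ s x s', |π s x s'| ≤ A + B * max ‖s‖ ‖s'‖)
    (hfold : ∀ s x, ∫ s', ‖s'‖ ∂(Q s x) ≤ C + (D / ((1 + δ) * B + δ * D)) * ‖s‖)
    (g : S → ℝ) (hgm : Measurable g) (hg : ∀ s, |g s| ≤ E + (B + D) * ‖s‖) :
    ∀ s, |⨆ x : X, ∫ s', (π s x s' + δ * g s') ∂(Q s x)|
      ≤ A + δ * E + (B + δ * (B + D)) * C + (B + D) * ‖s‖ := by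
  intro s
  have hK : 0 < (1 + δ) * B + δ * D := by positivity
  refine abs_ciSup_le fun x => ?_
  have := hQ s x
  have hπs : Continuous fun s' => π s x s' :=
    hπc.comp (continuous_const.prodMk (continuous_const.prodMk continuous_id))
  have hmeas : AEStronglyMeasurable (fun s' => π s x s' + δ * g s') (Q s x) :=
    hπs.aestronglyMeasurable.add (hgm.const_mul δ).aestronglyMeasurable
  calc |∫ s', (π s x s' + δ * g s') ∂(Q s x)|
      ≤ (A + B * ‖s‖ + δ * E) + (B + δ * (B + D)) * ∫ s', ‖s'‖ ∂(Q s x) :=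
        abs_integral_le_of_abs_le_add_mul (hQint s x) hmeas fun s' =>
          abs_add_mul_le_of_max_growth (norm_nonneg s) (norm_nonneg s') hB.le hδ0
            (hπ s x s') (hg s')
    _ ≤ (A + B * ‖s‖ + δ * E)
          + (B + δ * (B + D)) * (C + (D / ((1 + δ) * B + δ * D)) * ‖s‖) := by
        gcongr
        exact hfold s x
    _ = A + δ * E + (B + δ * (B + D)) * C + (B + D) * ‖s‖ := by
        -- the fold coefficient is chosen so that `B + δ * (B + D) = (1 + δ) * B + δ * D` cancels it
        field_simp
        ring

theorem bellman_growth_bound {S X : Type*} [NormedAddCommGroup S] [MeasurableSpace S]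
    [BorelSpace S] [TopologicalSpace X] [CompactSpace X] [Nonempty X]
    (Q : S → X → Measure S) (hQ : ∀ s x, IsProbabilityMeasure (Q s x))
    (hQint : ∀ s x, Integrable (fun s' => ‖s'‖) (Q s x))
    (π : S → X → S → ℝ) (hπc : Continuous fun p : S × X × S => π p.1 p.2.1 p.2.2)
    (A B C D δ E : ℝ) (hA : 0 < A) (hB : 0 < B) (hC : 0 < C) (hD : 0 < D)
    (hδ0 : 0 ≤ δ) (hδ1 : δ < 1) (hE : 0 < E)
    (hπ : ∀ s x s', |π s x s'| ≤ A + B * max ‖s‖ ‖s'‖)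
    (hfold : ∀ s x, ∫ s', ‖s'‖ ∂(Q s x) ≤ C + (D / ((1 + δ) * B + δ * D)) * ‖s‖)
    (g : S → ℝ) (hgm : Measurable g) (hg : ∀ s, |g s| ≤ E + (B + D) * ‖s‖) :
    ∀ s, |⨆ x : X, ∫ s', (π s x s' + δ * g s') ∂(Q s x)|
      ≤ A + δ * E + (B + δ * (B + D)) * C + (B + D) * ‖s‖ :=
  bellman_growth_bound_general Q hQ hQint π hπc A B C D δ E hB hD hδ0 hπ hfold g hgm hg
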